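/- arXiv:2006.14018 — 2 statements merged into one kernel-verified Lean document; each statement's English description precedes it below -/
import Mathlib

section
/- If q ≥ π/2, then the equation z·e^{z} + q = 0 has at least one complex root z with nonnegative real part. -/
/-!
On the curve `z(y) = -y cot y + i y` we have `z = -y e^{-iy} / sin y`, so `z e^z = -e^{Re z} y / sin y`
is a negative real number. For `y ∈ [π/2, π)` its modulus equals `π/2` at `y = π/2`, is at least
`y / sin y` (because `Re z = -y cot y ≥ 0`), hence tends to `∞` as `y → π`; the intermediate value
theorem makes it equal to `q`.
-/

open Real Set

noncomputable def cotCurve (y : ℝ) : ℂ := ⟨-(y * cot y), y⟩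

noncomputable def cotCurveModulus (y : ℝ) : ℝ := exp (-(y * cot y)) * y / sin y

lemma cotCurve_mul_exp {y : ℝ} (hy : sin y ≠ 0) :
    cotCurve y * Complex.exp (cotCurve y) = -(cotCurveModulus y : ℂ) := by
  have hsc := sin_sq_add_cos_sq y
  -- keep `cot` inside the exponential folded while the polynomial part is cleared of it
  set E := exp (-(y * cot y))
  apply Complex.ext <;>
    simp only [cotCurve, cotCurveModulus, Complex.mul_re, Complex.mul_im, Complex.exp_re,
      Complex.exp_im, Complex.neg_re, Complex.neg_im, Complex.ofReal_re, Complex.ofReal_im] <;>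
    rw [cot_eq_cos_div_sin] <;>
    field_simp
  · linear_combination (-y) * hsc
  · ring

lemma cotCurve_re_nonneg {y : ℝ} (h₁ : π / 2 ≤ y) (h₂ : y ≤ π) : 0 ≤ (cotCurve y).re := by
  have hcot : cot y ≤ 0 := by
    rw [cot_eq_cos_div_sin]
    exact div_nonpos_of_nonpos_of_nonneg (cos_nonpos_of_pi_div_two_le_of_le h₁ (by linarith))
      (sin_nonneg_of_nonneg_of_le_pi (by linarith [pi_pos]) h₂)
  have hy : 0 ≤ y := by linarith [pi_pos]
  simpa [cotCurve] using mul_nonpos_of_nonneg_of_nonpos hy hcot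

lemma div_sin_le_cotCurveModulus {y : ℝ} (h₁ : π / 2 ≤ y) (h₂ : y ≤ π) :
    y / sin y ≤ cotCurveModulus y := by
  have hexp : 1 ≤ exp (-(y * cot y)) := one_le_exp (cotCurve_re_nonneg h₁ h₂)
  have hy : 0 ≤ y / sin y :=
    div_nonneg (by linarith [pi_pos]) (sin_nonneg_of_nonneg_of_le_pi (by linarith [pi_pos]) h₂)
  rw [cotCurveModulus, mul_div_assoc]
  exact le_mul_of_one_le_left hy hexp

lemma sin_pos_of_mem_Ico {y : ℝ} (hy : y ∈ Ico (π / 2) π) : 0 < sin y :=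
  sin_pos_of_pos_of_lt_pi (by linarith [pi_pos, hy.1]) hy.2

lemma continuousOn_cotCurveModulus : ContinuousOn cotCurveModulus (Ico (π / 2) π) := by
  have hsin : ∀ y ∈ Ico (π / 2) π, sin y ≠ 0 := fun y hy => (sin_pos_of_mem_Ico hy).ne'
  unfold cotCurveModulus
  simp only [cot_eq_cos_div_sin]
  fun_prop (disch := assumption)

lemma cotCurveModulus_pi_div_two : cotCurveModulus (π / 2) = π / 2 := by
  simp [cotCurveModulus, cot_eq_cos_div_sin]

lemma exists_cotCurveModulus_eq {q : ℝ} (hq : π / 2 ≤ q) :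
    ∃ y ∈ Ico (π / 2) π, cotCurveModulus y = q := by
  have hq₀ : 0 < q := lt_of_lt_of_le (by positivity) hq
  have hs₀ : 0 < π / (2 * q) := by positivity
  have hs₁ : π / (2 * q) ≤ 1 := by rw [div_le_one (by positivity)]; linarith
  set b := π - arcsin (π / (2 * q))
  have hsin_b : sin b = π / (2 * q) := by
    rw [sin_pi_sub, sin_arcsin (by linarith) hs₁]
  have hb₁ : π / 2 ≤ b := by linarith [arcsin_le_pi_div_two (π / (2 * q))]
  have hb₂ : b < π := by linarith [arcsin_pos.mpr hs₀]
  have hqb : q ≤ cotCurveModulus b :=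
    calc q = (π / 2) / sin b := by rw [hsin_b]; field_simp
      _ ≤ b / sin b := by gcongr; rw [hsin_b]; positivity
      _ ≤ cotCurveModulus b := div_sin_le_cotCurveModulus hb₁ hb₂.le
  have hIcc : Icc (π / 2) b ⊆ Ico (π / 2) π := Icc_subset_Ico_right hb₂
  obtain ⟨y, hy, hyq⟩ := intermediate_value_Icc hb₁ (continuousOn_cotCurveModulus.mono hIcc)
    ⟨by rwa [cotCurveModulus_pi_div_two], hqb⟩
  exact ⟨y, hIcc hy, hyq⟩

theorem stmt_8 (q : ℝ) (hq : Real.pi / 2 ≤ q) :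
    ∃ z : ℂ, z * Complex.exp z + (q : ℂ) = 0 ∧ 0 ≤ z.re := by
  obtain ⟨y, hy, hyq⟩ := exists_cotCurveModulus_eq hq
  refine ⟨cotCurve y, ?_, cotCurve_re_nonneg hy.1 hy.2.le⟩
  rw [cotCurve_mul_exp (sin_pos_of_mem_Ico hy).ne', hyq]
  ring
end

section
/- All complex roots of z·e^{z} + q = 0 have negative real part if 0 < q < π/2. -/
/-!
If `Re z ≥ 0` then `‖z‖ ≤ ‖z e^z‖ = q < π/2`, so `|Im z| < π/2`. In that half-strip `z e^z` is
real only when `z` itself is real, and then `z e^z = x e^x ≥ 0 > -q`.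
-/

open Complex

lemma Real.mul_sin_nonneg {y : ℝ} (hy : |y| ≤ Real.pi) : 0 ≤ y * Real.sin y := by
  rcases abs_le.mp hy with ⟨hlo, hhi⟩
  rcases le_total 0 y with hy0 | hy0
  · exact mul_nonneg hy0 (Real.sin_nonneg_of_nonneg_of_le_pi hy0 hhi)
  · exact mul_nonneg_of_nonpos_of_nonpos hy0 (Real.sin_nonpos_of_nonpos_of_neg_pi_le hy0 hlo)

namespace Complex

lemma norm_le_norm_mul_exp {z : ℂ} (hre : 0 ≤ z.re) : ‖z‖ ≤ ‖z * exp z‖ := by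
  rw [norm_mul, norm_exp]
  exact le_mul_of_one_le_right (norm_nonneg z) (Real.one_le_exp hre)

/-- Multiplying `x sin y + y cos y = 0` by `y` gives a sum of two nonnegative terms,
the second of which is positive unless `y = 0`. -/
lemma im_eq_zero_of_im_mul_exp_eq_zero {z : ℂ} (hre : 0 ≤ z.re) (him : |z.im| < Real.pi / 2)
    (h : (z * exp z).im = 0) : z.im = 0 := by
  have hcos : 0 < Real.cos z.im := Real.cos_pos_of_mem_Ioo (abs_lt.mp him)
  have hsin : 0 ≤ z.im * Real.sin z.im := Real.mul_sin_nonneg (by linarith [Real.pi_pos])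
  have hlin : z.re * Real.sin z.im + z.im * Real.cos z.im = 0 := by
    simp only [mul_im, exp_re, exp_im] at h
    refine (mul_eq_zero.mp ?_).resolve_left (Real.exp_pos z.re).ne'
    linear_combination h
  have hsum : z.re * (z.im * Real.sin z.im) + z.im ^ 2 * Real.cos z.im = 0 := by
    linear_combination z.im * hlin
  by_contra hy
  have : 0 < z.im ^ 2 * Real.cos z.im := by positivity
  linarith [mul_nonneg hre hsin]

lemma re_mul_exp_nonneg {z : ℂ} (hre : 0 ≤ z.re) (him : z.im = 0) : 0 ≤ (z * exp z).re := by
  simp only [mul_re, exp_re, exp_im, him, Real.cos_zero, Real.sin_zero]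
  simpa using mul_nonneg hre (Real.exp_pos z.re).le

end Complex

theorem stmt_9 (q : ℝ) (hq0 : 0 < q) (hq : q < Real.pi / 2) :
    ∀ z : ℂ, z * Complex.exp z + (q : ℂ) = 0 → z.re < 0 := by
  intro z h
  by_contra! hre
  have hw : z * exp z = -q := eq_neg_of_add_eq_zero_left h
  have him : |z.im| < Real.pi / 2 := calc
    |z.im| ≤ ‖z‖ := abs_im_le_norm z
    _ ≤ ‖z * exp z‖ := norm_le_norm_mul_exp hre
    _ = q := by rw [hw, norm_neg, norm_real, Real.norm_of_nonneg hq0.le]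
    _ < Real.pi / 2 := hq
  have hreal : z.im = 0 := im_eq_zero_of_im_mul_exp_eq_zero hre him (by simp [hw])
  have := re_mul_exp_nonneg hre hreal
  rw [hw, neg_re, ofReal_re] at this
  linarith
end
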